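/- For all m and n, every element (φ,χ) of Π^m(𝛗,n) satisfies d(φ,χ) ≤ lh(𝛗)·2^n; consequently |Π^m(𝛗,n)| ≤ 2^{lh(𝛗)·2^n}, and hence there exists k with Π^k(𝛗,n) = Π^{k+1}(𝛗,n). -/

import Mathlib

/-- First-order terms with variables from `V`, built from constants
(function symbols) and application. -/
inductive Tm (V : Type) : Type
  | var : V → Tm V
  | const : ℕ → Tm V
  | app : Tm V → Tm V → Tm V
  deriving DecidableEq

namespace Tm

/-- Substitute terms for variables. -/
def bind {V W : Type} (f : V → Tm W) : Tm V → Tm W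
  | var v => f v
  | const c => const c
  | app s t => app (bind f s) (bind f t)

def vars {V : Type} : Tm V → List V
  | var v => [v]
  | const _ => []
  | app s t => vars s ++ vars t

/-- A term is a `w`-term (relative to the list `b` of bound variables) if all
its variables are free (not in `b`); after the starring operation all these
become the distinguished variable `w = 0`. -/
def wOnly (b : List ℕ) (t : Tm ℕ) : Bool :=
  t.vars.all fun v => decide (v ∉ b)

/-- Replace each maximal term whose only variable (after replacing free
variables by `w`) is `w` by the variable `w = 0`. -/
def collapse (b : List ℕ) : Tm ℕ → Tm ℕ
  | var v => if v ∈ b then var v else var 0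
  | const c => if wOnly b (const c) then var 0 else const c
  | app s t => if wOnly b (app s t) then var 0 else app (collapse b s) (collapse b t)

/-- Substitution of the term `u` for the variable `x`. -/
def substV (x : ℕ) (u : Tm ℕ) : Tm ℕ → Tm ℕ
  | var v => if v = x then u else var v
  | const c => const c
  | app s t => app (substV x u s) (substV x u t)

/-- The numeral for `a`. -/
def num : ℕ → Tm ℕ
  | 0 => const 0
  | n + 1 => app (const 1) (num n)

end Tm

/-- Formulas of the language L⁺: the propositional constant ε, the fresh
predicates `P_j`, the relations of L, equality, disjunction, negation and
universal quantification (over variable indices). -/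
inductive Fml (T : Type) : Type
  | eps : Fml T
  | pred : ℕ → T → Fml T
  | rel : ℕ → T → Fml T
  | eq : T → T → Fml T
  | or : Fml T → Fml T → Fml T
  | not : Fml T → Fml T
  | all : ℕ → Fml T → Fml T
  deriving DecidableEq

namespace Fml

/-- Map a function over the terms of a formula. -/
def mapT {T S : Type} (f : T → S) : Fml T → Fml S
  | eps => eps
  | pred j t => pred j (f t)
  | rel r t => rel r (f t)
  | eq s t => eq (f s) (f t)
  | or a b => or (mapT f a) (mapT f b)
  | not a => not (mapT f a)
  | all v a => all v (mapT f a)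

/-- Logical depth: number of connectives/quantifiers; atomic formulas have depth 0. -/
def depth {T : Type} : Fml T → ℕ
  | or a b => max (depth a) (depth b) + 1
  | not a => depth a + 1
  | all _ a => depth a + 1
  | _ => 0

/-- Number of occurrences of ε. -/
def epsCount {T : Type} : Fml T → ℕ
  | eps => 1
  | or a b => epsCount a + epsCount b
  | not a => epsCount a
  | all _ a => epsCount a
  | _ => 0

/-- Number of occurrences of fresh predicate symbols. -/
def predCount {T : Type} : Fml T → ℕ
  | pred _ _ => 1
  | or a b => predCount a + predCount b
  | not a => predCount a
  | all _ a => predCount a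
  | _ => 0

/-- A formula of the base language L: no ε and no fresh predicates. -/
def IsL {T : Type} (φ : Fml T) : Prop := φ.epsCount = 0 ∧ φ.predCount = 0

def isAtomic {T : Type} : Fml T → Prop
  | or _ _ => False
  | not _ => False
  | all _ _ => False
  | _ => True

/-- Replace every occurrence of ε by `χ`. -/
def substEps {T : Type} (χ : Fml T) : Fml T → Fml T
  | eps => χ
  | pred j t => pred j t
  | rel r t => rel r t
  | eq s t => eq s t
  | or a b => or (substEps χ a) (substEps χ b)
  | not a => not (substEps χ a)
  | all v a => all v (substEps χ a)

/-- Depth of the (unique) occurrence of ε. -/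
def epsDepth {T : Type} : Fml T → ℕ
  | or a b => (if epsCount a ≠ 0 then epsDepth a else epsDepth b) + 1
  | not a => epsDepth a + 1
  | all _ a => epsDepth a + 1
  | _ => 0

/-- Depths of the occurrences of fresh predicate symbols. -/
def predDepths {T : Type} : Fml T → List ℕ
  | pred _ _ => [0]
  | or a b => (predDepths a ++ predDepths b).map (· + 1)
  | not a => (predDepths a).map (· + 1)
  | all _ a => (predDepths a).map (· + 1)
  | _ => []

end Fml

/-- Formulas over concrete first-order terms with variables `ℕ`;
the distinguished variable `w` is `0`. -/
abbrev LFml := Fml (Tm ℕ)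

namespace Fml

/-- The bar normal form (relative to the bound variables `b`): replace every
free variable by `w` and then each maximal term whose only variable is `w` by `w`. -/
def barAux : List ℕ → LFml → LFml
  | b, pred j t => pred j (Tm.collapse b t)
  | b, rel r t => rel r (Tm.collapse b t)
  | b, eq s t => eq (Tm.collapse b s) (Tm.collapse b t)
  | b, or a c => or (barAux b a) (barAux b c)
  | b, not a => not (barAux b a)
  | b, all v a => all v (barAux (v :: b) a)
  | _, eps => eps

/-- The bar normal form of a formula. -/
def bar (φ : LFml) : LFml := barAux [] φ

/-- Equivalence of formulas: equal bar normal forms. -/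
def sim (φ ψ : LFml) : Prop := bar φ = bar ψ

/-- Binding-aware substitution of the term `u` for the variable `x` in a formula. -/
def substV (x : ℕ) (u : Tm ℕ) : LFml → LFml
  | eps => eps
  | pred j t => pred j (t.substV x u)
  | rel r t => rel r (t.substV x u)
  | eq s t => eq (s.substV x u) (t.substV x u)
  | or a b => or (substV x u a) (substV x u b)
  | not a => not (substV x u a)
  | all v a => if v = x then all v a else all v (substV x u a)

end Fml

/-- The set of parts Π(𝛗) of a sequence of formulas: pairs (ψ, χ) with ε
occurring exactly once in ψ, χ an L-formula, and ψ[χ/ε] a member of 𝛗. -/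
def Parts (φs : List LFml) : Set (LFml × LFml) :=
  {p | Fml.epsCount p.1 = 1 ∧ Fml.IsL p.2 ∧ Fml.substEps p.2 p.1 ∈ φs}

/-- The sub-part ordering: (φ,χ) ≺ (φ′,χ′) iff there is ψ (with exactly one ε,
and not ε itself) such that φ′[ψ/ε] = φ and ψ[χ/ε] = χ′. -/
def prec (p q : LFml × LFml) : Prop :=
  ∃ ψ : LFml, ψ ≠ Fml.eps ∧ Fml.epsCount ψ = 1 ∧
    Fml.substEps ψ q.1 = p.1 ∧ Fml.substEps p.2 ψ = q.2

/-- The depth of a part: the number of connectives/quantifiers between the root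
of φ and the occurrence of ε. -/
def pDepth (p : LFml × LFml) : ℕ := Fml.epsDepth p.1

/-- Π⁰(𝛗,n): parts of depth at most n. -/
def Pi0 (φs : List LFml) (n : ℕ) : Set (LFml × LFml) :=
  {p ∈ Parts φs | pDepth p ≤ n}

/-- The hierarchy Π^m(𝛗,n). -/
def PiH (φs : List LFml) (n : ℕ) : ℕ → Set (LFml × LFml)
  | 0 => Pi0 φs n
  | m + 1 => PiH φs n m ∪
      {p ∈ Parts φs | ∃ q ∈ PiH φs n m, ∃ q0 ∈ Pi0 φs n,
        Fml.sim q0.2 q.2 ∧ prec p q ∧ pDepth p - pDepth q ≤ n - pDepth q0}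

/-- The fixed point of the hierarchy Π^m(𝛗,n). -/
def PiLim (φs : List LFml) (n : ℕ) : Set (LFml × LFml) := ⋃ m, PiH φs n m

/-- Γ(𝛗,n). -/
def GammaSet (φs : List LFml) (n : ℕ) : Set LFml :=
  {χ | ∃ φ, (φ, χ) ∈ PiLim φs n}

/-- Γ_I(𝛗,n): formulas from ≺-minimal parts. -/
def GammaMin (φs : List LFml) (n : ℕ) : Set LFml :=
  {χ | ∃ φ, (φ, χ) ∈ PiLim φs n ∧ ∀ q ∈ PiLim φs n, ¬ prec q (φ, χ)}

/-- Apply an assignment (a partial map taking fresh predicates to formulas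
depending on the argument terms) to a formula; undefined predicates go to ε. -/
def applyAsg (g : ℕ → Option (Tm ℕ → LFml)) : LFml → LFml
  | .eps => .eps
  | .pred j t => (g j).elim Fml.eps fun f => f t
  | .rel r t => .rel r t
  | .eq s t => .eq s t
  | .or a b => .or (applyAsg g a) (applyAsg g b)
  | .not a => .not (applyAsg g a)
  | .all v a => .all v (applyAsg g a)

/-- 𝛗′ approximates 𝛗 iff some (finitely supported) assignment g satisfies 𝛗 = 𝛗′[g]. -/
def Approximates (φs' φs : List LFml) : Prop :=
  ∃ g : ℕ → Option (Tm ℕ → LFml), {j | (g j).isSome}.Finite ∧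
    φs = φs'.map (applyAsg g)

/-- The defining clauses of the canonical approximation function F_{𝛗,n}:
identity on atomic minimal parts; fresh predicates applied to instantiating
terms on nonatomic ≺-minimal parts, coherently with ∼-classes; commuting with
the outermost connective/quantifier on non-minimal parts; and recoverability
of the original formulas by a single assignment. -/
structure IsCanonApprox (F : LFml → LFml) (φs : List LFml) (n : ℕ) : Prop where
  atomMin : ∀ χ ∈ GammaMin φs n, χ.isAtomic → F χ = χ
  minFresh : ∀ χ ∈ GammaMin φs n, ¬ χ.isAtomic → ∃ j t, F χ = Fml.pred j t
  minClass : ∀ χ ∈ GammaMin φs n, ∀ χ' ∈ GammaMin φs n, ¬ χ.isAtomic → ¬ χ'.isAtomic →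
      (Fml.sim χ χ' ↔ ∃ j t t', F χ = Fml.pred j t ∧ F χ' = Fml.pred j t')
  commOr : ∀ a b, Fml.or a b ∈ GammaSet φs n → Fml.or a b ∉ GammaMin φs n →
      F (Fml.or a b) = Fml.or (F a) (F b)
  commNot : ∀ a, Fml.not a ∈ GammaSet φs n → Fml.not a ∉ GammaMin φs n →
      F (Fml.not a) = Fml.not (F a)
  commAll : ∀ v a, Fml.all v a ∈ GammaSet φs n → Fml.all v a ∉ GammaMin φs n →
      F (Fml.all v a) = Fml.all v (F a)
  recover : ∃ g : ℕ → Option (Tm ℕ → LFml), {j | (g j).isSome}.Finite ∧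
      ∀ χ ∈ GammaSet φs n, applyAsg g (F χ) = χ

/-- The n-th approximation of the sequence 𝛗, given a family F of canonical
approximation functions. -/
def approxSeq (F : List LFml → ℕ → LFml → LFml) (φs : List LFml) (n : ℕ) : List LFml :=
  φs.map (F φs n)

/-! A *position* of depth `< n` in 𝛗 splits a member of 𝛗 into a one-ε context of ε-depth `< n`
and the subformula sitting at the ε. Every part `p ∈ Π^m(𝛗,n)` can charge its depth to that many
distinct positions whose subformulas are strictly deeper than `p.2`. For `p ∈ Π⁰` these are the
ancestors of the ε of `p`. For `p ≺ q` with `q.2 ∼ q₀.2`, the context `ψ` separating `p` from `q`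
has a copy of the same ε-depth in `q₀.2`, because `∼` preserves the connective structure; the
ancestors of its ε inside `q₀` have depth `< n` by the side condition of `Π^{m+1}`, and their
subformulas are deeper than `p.2` but not than `q.2`, so they are disjoint from those charged by
`q`. A formula has fewer than `2^n` positions of depth `< n`, so every part has depth at most
`D = lh(𝛗)(2^n - 1)`. Hence `Π^m(𝛗,n)` lies in the at most `lh(𝛗)(2^{D+1} - 1) ≤ 2^{lh(𝛗)·2^n}`
positions of depth `≤ D`, and the increasing hierarchy must become stationary. -/

open Finset

theorem Finset.card_filter_lt_add_card_filter_mem_Ioc_le {α : Type*} [DecidableEq α]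
    (s : Finset α) (f : α → ℕ) {d d' : ℕ} (h : d ≤ d') :
    #(s.filter (d' < f ·)) + #(s.filter (f · ∈ Set.Ioc d d')) ≤ #(s.filter (d < f ·)) := by
  rw [← card_union_of_disjoint (disjoint_filter.2 fun _ _ h₁ h₂ => by simp only [Set.mem_Ioc] at h₂; omega)]
  exact card_le_card (union_subset (monotone_filter_right s fun _ _ hx => by omega)
    (monotone_filter_right s fun _ _ hx => hx.1))

theorem Set.exists_eq_succ_of_ncard_le {α : Type*} {s : ℕ → Set α} (hmono : ∀ k, s k ⊆ s (k + 1))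
    (hfin : ∀ k, (s k).Finite) {B : ℕ} (hB : ∀ k, (s k).ncard ≤ B) : ∃ k, s k = s (k + 1) := by
  by_contra! hne
  have hgrow (k : ℕ) : k ≤ (s k).ncard := by
    induction k with
    | zero => exact Nat.zero_le _
    | succ k ih => exact ih.trans_lt (ncard_lt_ncard ((hmono k).ssubset_of_ne (hne k)) (hfin _))
  exact (hgrow (B + 1)).not_gt (Nat.lt_succ_of_le (hB _))

theorem mul_two_pow_sub_one_le_two_pow (L n : ℕ) :
    L * (2 ^ (L * (2 ^ n - 1) + 1) - 1) ≤ 2 ^ (L * 2 ^ n) := by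
  rcases L.eq_zero_or_pos with rfl | hL
  · simp
  have h2L : 2 * L ≤ 2 ^ L := by
    have := Nat.lt_two_pow_self (n := L - 1)
    calc 2 * L ≤ 2 * 2 ^ (L - 1) := by omega
      _ = 2 ^ L := by rw [← pow_succ']; congr 1; omega
  calc L * (2 ^ (L * (2 ^ n - 1) + 1) - 1) ≤ L * 2 ^ (L * (2 ^ n - 1) + 1) :=
        Nat.mul_le_mul_left _ (Nat.sub_le _ _)
    _ = 2 ^ (L * (2 ^ n - 1)) * (2 * L) := by ring
    _ ≤ 2 ^ (L * (2 ^ n - 1)) * 2 ^ L := Nat.mul_le_mul_left _ h2L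
    _ = 2 ^ (L * 2 ^ n) := by
      rw [← pow_add, Nat.mul_sub_one,
        Nat.sub_add_cancel (Nat.le_mul_of_pos_right L (by positivity))]

namespace Fml

variable {T : Type}

instance : Inhabited (Fml T) := ⟨eps⟩

theorem substEps_of_epsCount_eq_zero {a : Fml T} (h : epsCount a = 0) (χ : Fml T) :
    substEps χ a = a := by
  induction a <;> simp_all [epsCount, substEps]

theorem epsCount_substEps (χ c : Fml T) :
    epsCount (substEps χ c) = epsCount c * epsCount χ := by
  induction c <;> simp_all [epsCount, substEps, Nat.add_mul]

theorem substEps_substEps (a b c : Fml T) :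
    substEps a (substEps b c) = substEps (substEps a b) c := by
  induction c <;> simp_all [substEps]

theorem epsDepth_or_of_epsCount_ne_zero {a : Fml T} (ha : epsCount a ≠ 0) (b : Fml T) :
    epsDepth (or a b) = epsDepth a + 1 := by
  simp [epsDepth, ha]

theorem epsDepth_or_of_epsCount_eq_zero {a : Fml T} (ha : epsCount a = 0) (b : Fml T) :
    epsDepth (or a b) = epsDepth b + 1 := by
  simp [epsDepth, ha]

theorem epsDepth_substEps {c ψ : Fml T} (hc : epsCount c = 1) (hψ : epsCount ψ = 1) :
    epsDepth (substEps ψ c) = epsDepth c + epsDepth ψ := by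
  induction c with
  | eps => simp [substEps, epsDepth]
  | or a b iha ihb =>
    simp only [epsCount] at hc
    by_cases ha : epsCount a = 0
    · rw [substEps, epsDepth_or_of_epsCount_eq_zero (by simp [epsCount_substEps, ha]),
        epsDepth_or_of_epsCount_eq_zero ha, ihb (by omega)]
      omega
    · rw [substEps, epsDepth_or_of_epsCount_ne_zero (by simp [epsCount_substEps, ha, hψ]),
        epsDepth_or_of_epsCount_ne_zero ha, iha (by omega)]
      omega
  | not a ih => simp only [substEps, epsDepth, ih hc]; omega
  | all v a ih => simp only [substEps, epsDepth, ih hc]; omega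
  | _ => simp [epsCount] at hc

theorem epsDepth_add_depth_le_depth_substEps {c : Fml T} (hc : epsCount c = 1) (χ : Fml T) :
    epsDepth c + depth χ ≤ depth (substEps χ c) := by
  induction c with
  | eps => simp [substEps, epsDepth]
  | or a b iha ihb =>
    simp only [epsCount] at hc
    simp only [substEps, depth]
    by_cases ha : epsCount a = 0
    · rw [epsDepth_or_of_epsCount_eq_zero ha]
      have := ihb (by omega)
      omega
    · rw [epsDepth_or_of_epsCount_ne_zero ha]
      have := iha (by omega)
      omega
  | not a ih => have := ih hc; simp only [substEps, epsDepth, depth]; omega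
  | all v a ih => have := ih hc; simp only [substEps, epsDepth, depth]; omega
  | _ => simp [epsCount] at hc

theorem depth_le_depth_substEps {c : Fml T} (hc : epsCount c = 1) (χ : Fml T) :
    depth χ ≤ depth (substEps χ c) :=
  (Nat.le_add_left _ _).trans (epsDepth_add_depth_le_depth_substEps hc χ)

theorem exists_prefix_of_le_epsDepth {c : Fml T} (hc : epsCount c = 1) {k : ℕ}
    (hk : k ≤ epsDepth c) :
    ∃ c₀ ψ, epsCount c₀ = 1 ∧ epsDepth c₀ = k ∧ substEps ψ c₀ = c := by
  induction k generalizing c with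
  | zero => exact ⟨eps, c, rfl, rfl, rfl⟩
  | succ k ih =>
    cases c with
    | or a b =>
      simp only [epsCount] at hc
      by_cases ha : epsCount a = 0
      · rw [epsDepth_or_of_epsCount_eq_zero ha] at hk
        obtain ⟨c₀, ψ, hcount, hdepth, rfl⟩ := ih (c := b) (by omega) (by omega)
        exact ⟨or a c₀, ψ, by simp [epsCount, ha, hcount],
          by rw [epsDepth_or_of_epsCount_eq_zero ha, hdepth],
          by simp [substEps, substEps_of_epsCount_eq_zero ha]⟩
      · rw [epsDepth_or_of_epsCount_ne_zero ha] at hk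
        have hb : epsCount b = 0 := by omega
        obtain ⟨c₀, ψ, hcount, hdepth, rfl⟩ := ih (c := a) (by omega) (by omega)
        exact ⟨or c₀ b, ψ, by simp [epsCount, hb, hcount],
          by rw [epsDepth_or_of_epsCount_ne_zero (by omega), hdepth],
          by simp [substEps, substEps_of_epsCount_eq_zero hb]⟩
    | not a =>
      obtain ⟨c₀, ψ, hcount, hdepth, rfl⟩ := ih (c := a) hc (by simpa [epsDepth] using hk)
      exact ⟨not c₀, ψ, hcount, by simp [epsDepth, hdepth], rfl⟩
    | all v a =>
      obtain ⟨c₀, ψ, hcount, hdepth, rfl⟩ := ih (c := a) hc (by simpa [epsDepth] using hk)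
      exact ⟨all v c₀, ψ, hcount, by simp [epsDepth, hdepth], rfl⟩
    | _ => simp [epsDepth] at hk

section Decompositions

variable [DecidableEq T]

def decomps : ℕ → Fml T → Finset (Fml T × Fml T)
  | 0, _ => ∅
  | n + 1, or a b => insert (eps, or a b) <|
      (decomps n a).image (Prod.map (or · b) id) ∪ (decomps n b).image (Prod.map (or a) id)
  | n + 1, not a => insert (eps, not a) <| (decomps n a).image (Prod.map not id)
  | n + 1, all v a => insert (eps, all v a) <| (decomps n a).image (Prod.map (all v) id)
  | _ + 1, θ => {(eps, θ)}

theorem card_decomps_le (n : ℕ) (θ : Fml T) : #(decomps n θ) ≤ 2 ^ n - 1 := by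
  induction n generalizing θ with
  | zero => simp [decomps]
  | succ n ih =>
    have h2 : 2 ^ (n + 1) - 1 = 2 * (2 ^ n - 1) + 1 := by
      have := Nat.one_le_two_pow (n := n); rw [pow_succ]; omega
    rw [h2]
    cases θ with
    | or a b =>
      refine (card_insert_le _ _).trans (Nat.add_le_add_right ?_ 1)
      refine (card_union_le _ _).trans ?_
      have := card_image_le (s := decomps n a) (f := Prod.map (or · b) id)
      have := card_image_le (s := decomps n b) (f := Prod.map (or a) id)
      have := ih a
      have := ih b
      omega
    | not a =>
      refine (card_insert_le _ _).trans (Nat.add_le_add_right ?_ 1)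
      exact card_image_le.trans ((ih a).trans (by omega))
    | all v a =>
      refine (card_insert_le _ _).trans (Nat.add_le_add_right ?_ 1)
      exact card_image_le.trans ((ih a).trans (by omega))
    | _ => simp [decomps]

theorem eps_mem_decomps (n : ℕ) (θ : Fml T) : (eps, θ) ∈ decomps (n + 1) θ := by
  cases θ <;> simp [decomps]

theorem mem_decomps {c : Fml T} (hc : epsCount c = 1) (χ : Fml T) {n : ℕ}
    (hn : epsDepth c < n) : (c, χ) ∈ decomps n (substEps χ c) := by
  rcases n with _ | n
  · omega
  induction c generalizing n with
  | eps => exact eps_mem_decomps _ _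
  | or a b iha ihb =>
    simp only [epsCount] at hc
    rcases n with _ | n
    · simp [epsDepth] at hn
    simp only [substEps, decomps]
    refine mem_insert_of_mem ?_
    by_cases ha : epsCount a = 0
    · rw [epsDepth_or_of_epsCount_eq_zero ha] at hn
      rw [substEps_of_epsCount_eq_zero ha]
      exact mem_union_right _ (mem_image_of_mem _ (ihb (by omega) n (by omega)))
    · rw [epsDepth_or_of_epsCount_ne_zero ha] at hn
      rw [substEps_of_epsCount_eq_zero (a := b) (by omega)]
      exact mem_union_left _ (mem_image_of_mem _ (iha (by omega) n (by omega)))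
  | not a ih =>
    rcases n with _ | n
    · simp [epsDepth] at hn
    exact mem_insert_of_mem (mem_image_of_mem _ (ih hc n (by simp_all [epsDepth])))
  | all v a ih =>
    rcases n with _ | n
    · simp [epsDepth] at hn
    exact mem_insert_of_mem (mem_image_of_mem _ (ih hc n (by simp_all [epsDepth])))
  | _ => simp [epsCount] at hc

end Decompositions

theorem depth_barAux (b : List ℕ) (φ : LFml) : depth (barAux b φ) = depth φ := by
  induction φ generalizing b <;> simp_all [barAux, depth]

theorem exists_substEps_of_barAux_eq {c : LFml} (hc : epsCount c = 1) {α χ : LFml}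
    (hα : epsCount α = 0) {b : List ℕ} (h : barAux b α = barAux b (substEps χ c)) :
    ∃ c' χ', α = substEps χ' c' ∧ epsCount c' = 1 ∧ epsDepth c' = epsDepth c ∧
      depth χ' = depth χ := by
  induction c generalizing α b with
  | eps => exact ⟨eps, α, rfl, rfl, rfl, by rw [← depth_barAux b, h, depth_barAux]; rfl⟩
  | or c₁ c₂ ih₁ ih₂ =>
    cases α with
    | or a₁ a₂ =>
      simp only [substEps, barAux, or.injEq] at h
      simp only [epsCount, Nat.add_eq_zero_iff] at hc hα
      by_cases h₁ : epsCount c₁ = 0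
      · obtain ⟨c', χ', rfl, hcount, hdepth, hχ'⟩ := ih₂ (by omega) hα.2 h.2
        exact ⟨or a₁ c', χ', by simp [substEps, substEps_of_epsCount_eq_zero hα.1],
          by simp [epsCount, hα.1, hcount], by
            rw [epsDepth_or_of_epsCount_eq_zero hα.1, epsDepth_or_of_epsCount_eq_zero h₁, hdepth],
          hχ'⟩
      · obtain ⟨c', χ', rfl, hcount, hdepth, hχ'⟩ := ih₁ (by omega) hα.1 h.1
        exact ⟨or c' a₂, χ', by simp [substEps, substEps_of_epsCount_eq_zero hα.2],
          by simp [epsCount, hα.2, hcount], by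
            rw [epsDepth_or_of_epsCount_ne_zero (by omega), epsDepth_or_of_epsCount_ne_zero h₁,
              hdepth],
          hχ'⟩
    | _ => simp_all [substEps, barAux, epsCount]
  | not c₁ ih =>
    cases α with
    | not a =>
      simp only [substEps, barAux, not.injEq] at h
      obtain ⟨c', χ', rfl, hcount, hdepth, hχ'⟩ := ih (α := a) hc hα h
      exact ⟨not c', χ', rfl, hcount, by simp [epsDepth, hdepth], hχ'⟩
    | _ => simp_all [substEps, barAux, epsCount]
  | all v c₁ ih =>
    cases α with
    | all w a =>
      simp only [substEps, barAux, all.injEq] at h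
      obtain ⟨rfl, h⟩ := h
      obtain ⟨c', χ', rfl, hcount, hdepth, hχ'⟩ := ih (α := a) hc hα h
      exact ⟨all w c', χ', rfl, hcount, by simp [epsDepth, hdepth], hχ'⟩
    | _ => simp_all [substEps, barAux, epsCount]
  | _ => simp [epsCount] at hc

end Fml

open Fml

section Positions

variable {T : Type} [DecidableEq T]

def positions (φs : List (Fml T)) (n : ℕ) : Finset (Fml T × Fml T) :=
  φs.toFinset.biUnion (decomps n)

theorem mem_positions {φs : List (Fml T)} {n : ℕ} {c χ : Fml T} (hc : epsCount c = 1)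
    (hmem : substEps χ c ∈ φs) (hn : epsDepth c < n) : (c, χ) ∈ positions φs n :=
  mem_biUnion.2 ⟨_, List.mem_toFinset.2 hmem, mem_decomps hc χ hn⟩

theorem card_positions_le (φs : List (Fml T)) (n : ℕ) :
    #(positions φs n) ≤ φs.length * (2 ^ n - 1) :=
  (card_biUnion_le_card_mul _ _ _ fun θ _ => card_decomps_le n θ).trans
    (Nat.mul_le_mul_right _ φs.toFinset_card_le)

/-- The `k`-th element counted is the ancestor of the ε of `c` at ε-depth `k`, seen inside the
member `c₀[c[χ/ε]/ε]` of `φs`. -/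
theorem epsDepth_le_card_positions_filter_depth_mem_Ioc {φs : List (Fml T)} {n : ℕ}
    {c₀ c χ : Fml T} (hc₀ : epsCount c₀ = 1) (hc : epsCount c = 1)
    (hmem : substEps (substEps χ c) c₀ ∈ φs) (hn : epsDepth c₀ + epsDepth c ≤ n) :
    epsDepth c ≤
      #((positions φs n).filter (depth ·.2 ∈ Set.Ioc (depth χ) (depth (substEps χ c)))) := by
  have hsplit (k : ℕ) (hk : k < epsDepth c) :
      ∃ c' ψ, epsCount c' = 1 ∧ epsDepth c' = k ∧ substEps ψ c' = c :=
    exists_prefix_of_le_epsDepth hc hk.le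
  choose! top bottom hsplit using hsplit
  rw [← card_range (epsDepth c)]
  refine card_le_card_of_injOn (fun k => (substEps (top k) c₀, substEps χ (bottom k))) ?_ ?_
  · intro k hk
    replace hk := mem_range.1 hk
    obtain ⟨htop, hdepth_top, hsplit⟩ := hsplit k hk
    have hbot : epsCount (bottom k) = 1 := by simpa [← hsplit, epsCount_substEps, htop] using hc
    have hdepth_c := epsDepth_substEps htop hbot
    rw [hsplit] at hdepth_c
    have := epsDepth_add_depth_le_depth_substEps hbot χ
    rw [mem_coe, mem_filter, Set.mem_Ioc]
    dsimp only
    refine ⟨mem_positions ?_ ?_ ?_, by omega, ?_⟩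
    · rw [epsCount_substEps, hc₀, htop]
    · rwa [substEps_substEps, ← substEps_substEps χ, hsplit]
    · rw [epsDepth_substEps hc₀ htop]
      omega
    · rw [← hsplit, substEps_substEps]
      exact depth_le_depth_substEps htop _
  · intro k hk k' hk' heq
    have := congrArg (fun x => epsDepth x.1) heq
    obtain ⟨htop, hdepth_top, -⟩ := hsplit k (mem_range.1 hk)
    obtain ⟨htop', hdepth_top', -⟩ := hsplit k' (mem_range.1 hk')
    simp only [epsDepth_substEps hc₀ htop, epsDepth_substEps hc₀ htop'] at this
    omega

end Positions

theorem PiH_subset_Parts (φs : List LFml) (n : ℕ) : ∀ m, PiH φs n m ⊆ Parts φs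
  | 0 => fun _ hp => hp.1
  | m + 1 => Set.union_subset (PiH_subset_Parts φs n m) fun _ hp => hp.1

theorem pDepth_le_card_positions_filter_lt_depth {φs : List LFml} {n : ℕ} :
    ∀ {m : ℕ} {p : LFml × LFml}, p ∈ PiH φs n m →
      pDepth p ≤ #((positions φs n).filter (depth p.2 < depth ·.2))
  | 0, p, ⟨⟨hcount, _, hmem⟩, hdepth⟩ =>
    (epsDepth_le_card_positions_filter_depth_mem_Ioc (c₀ := eps) rfl hcount hmem
      ((zero_add _).trans_le hdepth)).trans
      (card_le_card (monotone_filter_right _ fun _ _ hx => hx.1))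
  | m + 1, p, Or.inl hp => pDepth_le_card_positions_filter_lt_depth hp
  | m + 1, p, Or.inr ⟨_, q, hq, q₀, ⟨⟨hq₀count, hq₀L, hq₀mem⟩, hq₀depth⟩, hsim,
      ⟨ψ, _, hψ, hψq, hψp⟩, hle⟩ => by
    have hpq : pDepth p = pDepth q + epsDepth ψ := by
      rw [pDepth, ← hψq, epsDepth_substEps (PiH_subset_Parts φs n m hq).1 hψ, pDepth]
    obtain ⟨ψ', χ', hq₀, hψ', hψ'depth, hχ'⟩ :=
      exists_substEps_of_barAux_eq hψ hq₀L.1 (hsim.trans (congrArg bar hψp.symm))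
    have hdepth_q₀ : depth q₀.2 = depth q.2 := by
      rw [← depth_barAux [] q₀.2, ← depth_barAux [] q.2]
      exact congrArg depth hsim
    have hnew := epsDepth_le_card_positions_filter_depth_mem_Ioc (n := n) hq₀count hψ'
      (hq₀ ▸ hq₀mem) (by simp only [pDepth] at hle hpq hq₀depth; omega)
    rw [hχ', ← hq₀, hdepth_q₀] at hnew
    have hold := pDepth_le_card_positions_filter_lt_depth hq
    have := card_filter_lt_add_card_filter_mem_Ioc_le (positions φs n) (depth ·.2)
      (hψp ▸ depth_le_depth_substEps hψ p.2)
    omega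

theorem pDepth_le_of_mem_PiH {φs : List LFml} {n m : ℕ} {p : LFml × LFml}
    (hp : p ∈ PiH φs n m) : pDepth p ≤ φs.length * (2 ^ n - 1) :=
  (pDepth_le_card_positions_filter_lt_depth hp).trans
    ((card_filter_le _ _).trans (card_positions_le φs n))

theorem PiH_subset_positions (φs : List LFml) (n m : ℕ) :
    PiH φs n m ⊆ positions φs (φs.length * (2 ^ n - 1) + 1) := fun _ hp =>
  have ⟨hcount, _, hmem⟩ := PiH_subset_Parts φs n m hp
  mem_positions hcount hmem (Nat.lt_succ_of_le (pDepth_le_of_mem_PiH hp))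

/-- Every element of Π^m(𝛗,n) has depth at most lh(𝛗)·2^n; consequently
|Π^m(𝛗,n)| ≤ 2^{lh(𝛗)·2^n} and the hierarchy reaches a fixed point. -/
theorem PiH_depth_card_fixed (φs : List LFml) (n : ℕ) :
    (∀ m, ∀ p ∈ PiH φs n m, pDepth p ≤ φs.length * 2 ^ n) ∧
    (∀ m, (PiH φs n m).Finite ∧ (PiH φs n m).ncard ≤ 2 ^ (φs.length * 2 ^ n)) ∧
    (∃ k, PiH φs n k = PiH φs n (k + 1)) := by
  have hfinite (m : ℕ) : (PiH φs n m).Finite :=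
    (finite_toSet _).subset (PiH_subset_positions φs n m)
  have hcard (m : ℕ) : (PiH φs n m).ncard ≤ 2 ^ (φs.length * 2 ^ n) :=
    calc (PiH φs n m).ncard ≤ #(positions φs (φs.length * (2 ^ n - 1) + 1)) := by
          simpa using Set.ncard_le_ncard (PiH_subset_positions φs n m) (finite_toSet _)
      _ ≤ φs.length * (2 ^ (φs.length * (2 ^ n - 1) + 1) - 1) := card_positions_le _ _
      _ ≤ 2 ^ (φs.length * 2 ^ n) := mul_two_pow_sub_one_le_two_pow _ _
  refine ⟨fun m p hp => ?_, fun m => ⟨hfinite m, hcard m⟩,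
    Set.exists_eq_succ_of_ncard_le (fun _ => Set.subset_union_left) hfinite hcard⟩
  exact (pDepth_le_of_mem_PiH hp).trans (Nat.mul_le_mul_left _ (Nat.sub_le _ _))
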